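/- Let s ≤ d with d/s ≥ 3 and r > 0. Then ∫₀^r log N(T, ε) dε ≤ C·r·s·log(d/s) for the set T = {v ∈ ℝ^d : ‖v‖₀ ≤ 9s, ‖v‖₂ ≤ r} and a universal constant C. -/

import Mathlib

/-- The minimal cardinality of an `ε`-net (covering number) of a set `T` in `ℝ^d`. -/
noncomputable def coveringNumber {d : ℕ} (T : Set (EuclideanSpace ℝ (Fin d)))
    (ε : ℝ) : ℕ :=
  sInf {n : ℕ | ∃ F : Finset (EuclideanSpace ℝ (Fin d)), F.card = n ∧
    ∀ v ∈ T, ∃ u ∈ F, ‖v - u‖ ≤ ε}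

/-!
A `9s`-sparse vector lies in one of the `C(d, k)` coordinate subspaces of dimension
`k = min(9s, d)`. In a `k`-dimensional normed space a maximal `ε`-separated subset of a ball of
radius `r` is an `ε`-net, and comparing the volumes of the disjoint balls of radius `ε/2` around
its points with that of the ball of radius `r + ε/2` bounds its size by `(3r/ε)^k`. Hence
`log N(T, ε) ≤ log C(d, k) + k log(3r/ε)`; since `∫₀^r log(3r/ε) dε = r (log 3 + 1)` and
`log C(d, k) ≤ k (1 + log(d/k))`, the entropy integral is at most `36 r s log(d/s)`.
-/

open MeasureTheory Metric Module Real Set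
open scoped NNReal ENNReal

section FiniteDimensional

variable {E : Type*} [NormedAddCommGroup E] [NormedSpace ℝ E] [FiniteDimensional ℝ E]

theorem Metric.IsSeparated.card_le_of_subset_closedBall {ε : ℝ≥0} {r : ℝ} (hε : 0 < ε)
    (hεr : ε ≤ r) {x : E} {F : Finset E} (hF : (F : Set E) ⊆ closedBall x r)
    (hsep : IsSeparated ε (F : Set E)) :
    (F.card : ℝ) ≤ (3 * r / ε) ^ finrank ℝ E := by
  have hε' : (0 : ℝ) < ε := hε
  have hr : 0 ≤ r := hε'.le.trans hεr
  let _ : MeasurableSpace E := borel E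
  have _ : BorelSpace E := ⟨rfl⟩
  set μ : Measure E := Measure.addHaar
  set V := μ.real (closedBall (0 : E) 1)
  have hV : 0 < V :=
    ENNReal.toReal_pos (measure_closedBall_pos μ 0 one_pos).ne' measure_closedBall_lt_top.ne
  have hdisj : (F : Set E).PairwiseDisjoint (closedBall · (ε / 2 : ℝ)) := by
    intro y hy z hz hyz
    refine closedBall_disjoint_closedBall ?_
    have h : (ε : ℝ≥0∞) < edist y z := hsep hy hz hyz
    rw [edist_nndist, ENNReal.coe_lt_coe, ← NNReal.coe_lt_coe, coe_nndist] at h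
    linarith
  have hunion : (⋃ y ∈ F, closedBall y (ε / 2 : ℝ)) ⊆ closedBall x (r + ε / 2) :=
    Set.iUnion₂_subset fun y hy => closedBall_subset_closedBall' (by
      linarith [mem_closedBall.1 (hF hy)])
  have hvol : F.card * (ε / 2 : ℝ) ^ finrank ℝ E * V ≤ (r + ε / 2) ^ finrank ℝ E * V :=
    calc F.card * (ε / 2 : ℝ) ^ finrank ℝ E * V
        = ∑ y ∈ F, μ.real (closedBall y (ε / 2 : ℝ)) := by
          simp [Measure.addHaar_real_closedBall' μ _ (by positivity : (0 : ℝ) ≤ ε / 2), V,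
            mul_assoc]
      _ = μ.real (⋃ y ∈ F, closedBall y (ε / 2 : ℝ)) :=
          (measureReal_biUnion_finset hdisj (fun _ _ => measurableSet_closedBall)
            fun _ _ => measure_closedBall_lt_top.ne).symm
      _ ≤ μ.real (closedBall x (r + ε / 2)) :=
          measureReal_mono hunion measure_closedBall_lt_top.ne
      _ = (r + ε / 2) ^ finrank ℝ E * V :=
          Measure.addHaar_real_closedBall' μ x (by positivity)
  calc (F.card : ℝ) ≤ ((r + ε / 2) / (ε / 2)) ^ finrank ℝ E := by
        rw [div_pow, le_div_iff₀ (by positivity)]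
        exact le_of_mul_le_mul_right hvol hV
    _ ≤ (3 * r / ε) ^ finrank ℝ E := by
        refine pow_le_pow_left₀ (by positivity) ?_ _
        rw [div_le_div_iff₀ (by positivity) hε']
        nlinarith

theorem Metric.IsSeparated.encard_le_of_subset_closedBall {ε : ℝ≥0} {r : ℝ} (hε : 0 < ε)
    (hεr : ε ≤ r) {x : E} {C : Set E} (hC : C ⊆ closedBall x r) (hsep : IsSeparated ε C) :
    C.encard ≤ ⌊(3 * r / ε) ^ finrank ℝ E⌋₊ := by
  by_contra! hlt
  obtain ⟨t, htC, ht⟩ := Set.exists_subset_encard_eq (Order.add_one_le_of_lt hlt)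
  have htfin : t.Finite := Set.finite_of_encard_eq_coe ht
  have hcard : htfin.toFinset.card = ⌊(3 * r / ε) ^ finrank ℝ E⌋₊ + 1 := by
    rw [htfin.encard_eq_coe_toFinset_card] at ht
    exact_mod_cast ht
  have hle := IsSeparated.card_le_of_subset_closedBall hε hεr (F := htfin.toFinset)
    (by simpa using htC.trans hC) (by simpa using hsep.subset htC)
  rw [hcard, Nat.cast_add_one] at hle
  exact (Nat.lt_floor_add_one _).not_ge hle

theorem Metric.packingNumber_closedBall_le {ε : ℝ≥0} {r : ℝ} (hε : 0 < ε) (hεr : ε ≤ r)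
    (x : E) :
    packingNumber ε (closedBall x r) ≤ ⌊(3 * r / ε) ^ finrank ℝ E⌋₊ :=
  iSup₂_le fun _ hC => iSup_le fun hsep => hsep.encard_le_of_subset_closedBall hε hεr hC

theorem Metric.exists_finset_isCover_closedBall {ε : ℝ≥0} {r : ℝ} (hε : 0 < ε) (hεr : ε ≤ r)
    (x : E) : ∃ F : Finset E, (F.card : ℝ) ≤ (3 * r / ε) ^ finrank ℝ E ∧
      IsCover ε (closedBall x r) F := by
  have hpack := packingNumber_closedBall_le hε hεr x
  have hfinite : packingNumber ε (closedBall x r) ≠ ⊤ := ne_top_of_le_ne_top (by simp) hpack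
  set C := maximalSeparatedSet ε (closedBall x r)
  have hC : C.encard ≤ ⌊(3 * r / ε) ^ finrank ℝ E⌋₊ :=
    (encard_maximalSeparatedSet hfinite).trans_le hpack
  have hfin : C.Finite := Set.finite_of_encard_le_coe hC
  refine ⟨hfin.toFinset, ?_, by simpa using isCover_maximalSeparatedSet hfinite⟩
  rw [hfin.encard_eq_coe_toFinset_card, Nat.cast_le] at hC
  have hr : 0 ≤ r := ε.coe_nonneg.trans hεr
  exact (Nat.cast_le.2 hC).trans (Nat.floor_le (by positivity))

end FiniteDimensional

theorem EuclideanSpace.exists_finset_net_of_support_subset {ι : Type*} [Fintype ι]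
    (S : Finset ι) {ε r : ℝ}
    (hε : 0 < ε) (hεr : ε ≤ r) :
    ∃ F : Finset (EuclideanSpace ℝ ι), (F.card : ℝ) ≤ (3 * r / ε) ^ S.card ∧
      ∀ v : EuclideanSpace ℝ ι, Function.support v ⊆ S → ‖v‖ ≤ r → ∃ u ∈ F, ‖v - u‖ ≤ ε := by
  classical
  lift ε to ℝ≥0 using hε.le
  set V := Submodule.span ℝ
    ((S.image (basisFun ι ℝ).toBasis : Finset _) : Set (EuclideanSpace ℝ ι)) with hVdef
  have hV : finrank ℝ V ≤ S.card := (finrank_span_finset_le_card _).trans Finset.card_image_le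
  have hmem : ∀ v : EuclideanSpace ℝ ι, Function.support v ⊆ S → v ∈ V := fun v hv => by
    rw [hVdef, Finset.coe_image, Basis.mem_span_image]
    exact fun i hi => hv (by simpa using hi)
  obtain ⟨F, hFcard, hFcover⟩ :=
    exists_finset_isCover_closedBall (E := V) (by exact_mod_cast hε) hεr 0
  refine ⟨F.map (Function.Embedding.subtype _), ?_, fun v hvS hvr => ?_⟩
  · rw [Finset.card_map]
    refine hFcard.trans (pow_le_pow_right₀ ?_ hV)
    rw [le_div_iff₀ (by exact_mod_cast hε)]
    linarith
  · obtain ⟨u, huF, hvu⟩ := hFcover (x := ⟨v, hmem v hvS⟩) (by simpa using hvr)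
    refine ⟨u, Finset.mem_map_of_mem _ huF, ?_⟩
    rw [← dist_eq_norm]
    exact_mod_cast edist_le_coe.1 hvu

theorem coveringNumber_le_card {d : ℕ} {T : Set (EuclideanSpace ℝ (Fin d))} {ε : ℝ}
    (F : Finset (EuclideanSpace ℝ (Fin d))) (hF : ∀ v ∈ T, ∃ u ∈ F, ‖v - u‖ ≤ ε) :
    coveringNumber T ε ≤ F.card :=
  Nat.sInf_le ⟨F, rfl, hF⟩

theorem coveringNumber_le_choose_mul_pow_of_sparse {d k : ℕ} (hkd : k ≤ d)
    {T : Set (EuclideanSpace ℝ (Fin d))} {r ε : ℝ} (hε : 0 < ε) (hεr : ε ≤ r)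
    (hT : ∀ v ∈ T, (Function.support v).ncard ≤ k ∧ ‖v‖ ≤ r) :
    (coveringNumber T ε : ℝ) ≤ d.choose k * (3 * r / ε) ^ k := by
  classical
  choose F hFcard hFnet using fun S : Finset (Fin d) =>
    EuclideanSpace.exists_finset_net_of_support_subset S hε hεr
  set 𝒩 := (Finset.univ.powersetCard k).biUnion F
  have hcover : ∀ v ∈ T, ∃ u ∈ 𝒩, ‖v - u‖ ≤ ε := by
    intro v hv
    obtain ⟨hvk, hvr⟩ := hT v hv
    obtain ⟨S, hvS, -, hS⟩ :=
      Set.exists_subsuperset_card_eq (subset_univ _) hvk (by simpa using hkd)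
    obtain ⟨u, hu, hvu⟩ := hFnet S.toFinset v (by simpa using hvS) hvr
    refine ⟨u, Finset.mem_biUnion.2 ⟨S.toFinset, ?_, hu⟩, hvu⟩
    rwa [Finset.mem_powersetCard_univ, ← ncard_eq_toFinset_card']
  calc (coveringNumber T ε : ℝ) ≤ 𝒩.card := by exact_mod_cast coveringNumber_le_card 𝒩 hcover
    _ ≤ ∑ S ∈ Finset.univ.powersetCard k, ((F S).card : ℝ) := by
        exact_mod_cast Finset.card_biUnion_le
    _ ≤ ∑ S ∈ Finset.univ.powersetCard k, (3 * r / ε) ^ k :=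
        Finset.sum_le_sum fun S hS => Finset.mem_powersetCard_univ.1 hS ▸ hFcard S
    _ = d.choose k * (3 * r / ε) ^ k := by simp [Finset.card_powersetCard]

theorem intervalIntegral_log_le_of_le_mul_pow {N : ℝ → ℕ} {A B r : ℝ} {k : ℕ} (hr : 0 < r)
    (hA : 1 ≤ A) (hrB : r ≤ B) (hN : ∀ ε ∈ Ioc 0 r, (N ε : ℝ) ≤ A * (B / ε) ^ k) :
    ∫ ε in (0 : ℝ)..r, log (N ε) ≤ r * log A + k * r * (log (B / r) + 1) := by
  set g : ℝ → ℝ := fun ε => log A + k * (log B - log ε)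
  have hlog : IntervalIntegrable (fun ε => log B - log ε) volume 0 r :=
    intervalIntegrable_const.sub intervalIntegral.intervalIntegrable_log'
  have hg : IntervalIntegrable g volume 0 r := intervalIntegrable_const.add (hlog.const_mul _)
  have hNg : ∀ ε ∈ Ioc 0 r, log (N ε) ≤ g ε := by
    rintro ε ⟨hε, hεr⟩
    have hB : 1 ≤ B / ε := by rw [le_div_iff₀ hε]; linarith
    have hbound : 1 ≤ A * (B / ε) ^ k := one_le_mul_of_one_le_of_one_le hA (one_le_pow₀ hB)
    calc log (N ε) ≤ log (A * (B / ε) ^ k) := by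
          rcases (N ε).eq_zero_or_pos with h0 | hpos
          · simpa [h0] using log_nonneg hbound
          · exact log_le_log (by exact_mod_cast hpos) (hN ε ⟨hε, hεr⟩)
      _ = g ε := by
          rw [log_mul (by linarith) (pow_pos (by linarith) k).ne', log_pow,
            log_div (by linarith) hε.ne']
  calc ∫ ε in (0 : ℝ)..r, log (N ε) ≤ ∫ ε in (0 : ℝ)..r, g ε := by
        -- `ε ↦ log (N ε)` is not known to be integrable; a nonnegative function needs only an
        -- integrable majorant.
        rw [intervalIntegral.integral_of_le hr.le, intervalIntegral.integral_of_le hr.le]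
        refine integral_mono_of_nonneg
          (Filter.Eventually.of_forall fun ε => log_natCast_nonneg _) hg.1 ?_
        exact (ae_restrict_iff' measurableSet_Ioc).2 (Filter.Eventually.of_forall hNg)
    _ = r * log A + k * r * (log (B / r) + 1) := by
        simp only [g]
        rw [intervalIntegral.integral_add intervalIntegrable_const (hlog.const_mul _),
          intervalIntegral.integral_const_mul,
          intervalIntegral.integral_sub intervalIntegrable_const
          intervalIntegral.intervalIntegrable_log', integral_log, intervalIntegral.integral_const,
          intervalIntegral.integral_const, log_div (by linarith) hr.ne']
        simp only [sub_zero, smul_eq_mul, zero_mul, add_zero]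
        ring

theorem Nat.choose_le_exp_mul_div_pow {n k : ℕ} (hk : k ≠ 0) :
    (n.choose k : ℝ) ≤ (exp 1 * n / k) ^ k := by
  have hk' : (0 : ℝ) < k := by exact_mod_cast Nat.pos_of_ne_zero hk
  rw [div_pow, mul_pow, exp_one_pow, le_div_iff₀ (by positivity)]
  calc (n.choose k : ℝ) * k ^ k ≤ n ^ k / k.factorial * k ^ k := by
        gcongr; exact Nat.choose_le_pow_div k n
    _ = n ^ k * (k ^ k / k.factorial) := by ring
    _ ≤ n ^ k * exp k := by gcongr; exact pow_div_factorial_le_exp _ hk'.le k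
    _ = exp k * n ^ k := mul_comm _ _

theorem Real.log_choose_le {n k : ℕ} (hk : k ≠ 0) (hkn : k ≤ n) :
    log (n.choose k) ≤ k * (1 + log (n / k)) := by
  have hk' : (0 : ℝ) < k := by exact_mod_cast Nat.pos_of_ne_zero hk
  have hn : (0 : ℝ) < n := hk'.trans_le (by exact_mod_cast hkn)
  calc log (n.choose k) ≤ log ((exp 1 * n / k) ^ k) :=
        log_le_log (by exact_mod_cast Nat.choose_pos hkn) (Nat.choose_le_exp_mul_div_pow hk)
    _ = k * (1 + log (n / k)) := by
        rw [log_pow, mul_div_assoc, log_mul (exp_pos 1).ne' (by positivity), log_exp]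

/-- γ₁-type entropy integral bound: there is a universal constant `C` such that for
`s ≤ d` with `d/s ≥ 3` and `r > 0`, the set `T` of `9s`-sparse vectors of `ℓ₂`-norm at
most `r` satisfies `∫₀^r log N(T, ε) dε ≤ C·r·s·log(d/s)`. -/
theorem entropy_integral_first_order_sparse :
    ∃ C : ℝ, 0 < C ∧ ∀ (d s : ℕ), 1 ≤ s → s ≤ d → 3 ≤ (d : ℝ) / s → ∀ r : ℝ, 0 < r →
      (∫ ε in (0 : ℝ)..r, Real.log (coveringNumber
          {v : EuclideanSpace ℝ (Fin d) |
            ((Function.support v).ncard : ℝ) ≤ 9 * s ∧ ‖v‖ ≤ r} ε)) ≤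
        C * r * (s : ℝ) * Real.log ((d : ℝ) / s) := by
  refine ⟨36, by norm_num, fun d s hs hsd hds r hr => ?_⟩
  set T : Set (EuclideanSpace ℝ (Fin d)) :=
    {v | ((Function.support v).ncard : ℝ) ≤ 9 * s ∧ ‖v‖ ≤ r}
  set k := min (9 * s) d
  have hk : k ≠ 0 := by omega
  have hkd : k ≤ d := min_le_right _ _
  have hk9 : (k : ℝ) ≤ 9 * s := by exact_mod_cast min_le_left _ _
  have hL3 : log 3 ≤ log (d / s) := log_le_log (by norm_num) hds
  have hL1 : 1 ≤ log (d / s) := by linarith [log_three_gt_d9]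
  have hsk : (s : ℝ) ≤ k := by exact_mod_cast le_min (by omega) hsd
  have hchoose : log (d.choose k) ≤ k * (1 + log (d / s)) := by
    refine (log_choose_le hk hkd).trans ?_
    have hk0 : (0 : ℝ) < k := by exact_mod_cast Nat.pos_of_ne_zero hk
    gcongr
    exact div_pos (hk0.trans_le (by exact_mod_cast hkd)) hk0
  have hN : ∀ ε ∈ Ioc 0 r, (coveringNumber T ε : ℝ) ≤ d.choose k * (3 * r / ε) ^ k :=
    fun ε hε => coveringNumber_le_choose_mul_pow_of_sparse hkd hε.1 hε.2 fun v hv =>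
      ⟨le_min (by exact_mod_cast hv.1) ((ncard_le_card _).trans_eq (by simp)), hv.2⟩
  calc _ ≤ r * log (d.choose k) + k * r * (log (3 * r / r) + 1) :=
        intervalIntegral_log_le_of_le_mul_pow hr (by exact_mod_cast Nat.choose_pos hkd)
          (by linarith) hN
    _ = r * log (d.choose k) + k * r * (log 3 + 1) := by
        rw [mul_div_assoc, div_self hr.ne', mul_one]
    _ ≤ r * (k * (1 + log (d / s))) + k * r * (log 3 + 1) := by gcongr
    _ ≤ r * (k * (log (d / s) + log (d / s))) + k * r * (log (d / s) + log (d / s)) := by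
        gcongr
    _ = k * r * (4 * log (d / s)) := by ring
    _ ≤ 9 * s * r * (4 * log (d / s)) := by gcongr
    _ = 36 * r * s * log (d / s) := by ring
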